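/- arXiv:1311.2671 — 6 statements merged into one kernel-verified Lean document; each statement's English description precedes it below -/
import Mathlib

section
/- Let n, k, s·n be positive integers with k/n < s < 1. For any set E of k-subsets of [n], if there exist nonnegative reals α_1, …, α_{sn-1} with Σ_j α_j = 1 such that every e ∈ E satisfies Σ_{j=1}^{sn-1} α_j·𝟙_e(j) > k/(sn), then the hypergraph ([n], E) has no fractional matching of cardinality s. -/
open Finset

def isFracMatching (n k : ℕ) (E : Finset (Finset ℕ)) (s : ℝ) : Prop :=
  ∃ α : Finset ℕ → ℝ, (∀ f, 0 ≤ α f) ∧ (∑ f ∈ E, α f) = s ∧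
    ∀ j ∈ Finset.Icc 1 n, 0 ≤ (∑ f ∈ E, α f * (if j ∈ f then 1 else 0)) ∧
      (∑ f ∈ E, α f * (if j ∈ f then 1 else 0)) ≤ (k : ℝ) / n

/-!
Weak LP duality. Pair a fractional matching `β` of cardinality `s` with the vertex weights `α`
through `∑_e β_e ∑_j α_j 𝟙_e(j)`. Summed edge by edge, every edge contributes more than
`β_e · k/(sn)`, so the pairing exceeds `s · k/(sn) = k/n`. Summed vertex by vertex, every
vertex `j ≤ sn - 1 < n` carries load at most `k/n`, and the `α_j` form a probability vector,
so the pairing is at most `k/n`.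
-/

section Pairing

variable {ι κ R : Type*} [CommSemiring R]

theorem sum_mul_sum_mul_comm (E : Finset ι) (J : Finset κ) (β : ι → R) (α : κ → R)
    (M : κ → ι → R) :
    ∑ e ∈ E, β e * ∑ j ∈ J, α j * M j e = ∑ j ∈ J, α j * ∑ e ∈ E, β e * M j e := by
  simp only [mul_sum]
  rw [sum_comm]
  exact sum_congr rfl fun _ _ => sum_congr rfl fun _ _ => by ring

variable [LinearOrder R] [IsStrictOrderedRing R]

theorem mul_sum_lt_sum_mul_of_forall_lt {E : Finset ι} {β x : ι → R} {t : R}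
    (hβ0 : ∀ e ∈ E, 0 ≤ β e) (hβpos : 0 < ∑ e ∈ E, β e) (hx : ∀ e ∈ E, t < x e) :
    t * ∑ e ∈ E, β e < ∑ e ∈ E, β e * x e := by
  obtain ⟨e, he, hβe⟩ : ∃ e ∈ E, 0 < β e := exists_lt_of_sum_lt (by simpa using hβpos)
  rw [mul_sum]
  refine sum_lt_sum (fun e he => ?_) ⟨e, he, ?_⟩
  · rw [mul_comm]
    exact mul_le_mul_of_nonneg_left (hx e he).le (hβ0 e he)
  · rw [mul_comm]
    exact mul_lt_mul_of_pos_left (hx e he) hβe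

theorem sum_mul_le_of_sum_eq_one {J : Finset κ} {α y : κ → R} {c : R}
    (hα0 : ∀ j ∈ J, 0 ≤ α j) (hα1 : ∑ j ∈ J, α j = 1) (hy : ∀ j ∈ J, y j ≤ c) :
    ∑ j ∈ J, α j * y j ≤ c :=
  calc ∑ j ∈ J, α j * y j
      ≤ ∑ j ∈ J, α j * c := sum_le_sum fun j hj => mul_le_mul_of_nonneg_left (hy j hj) (hα0 j hj)
    _ = c := by rw [← sum_mul, hα1, one_mul]

end Pairing

theorem stmt2_general (n k m : ℕ) (s : ℝ) (hm : 0 < m)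
    (hsn : (m : ℝ) = s * n) (hs2 : s < 1)
    (E : Finset (Finset ℕ))
    (α : ℕ → ℝ) (hα0 : ∀ j, 0 ≤ α j) (hα1 : ∑ j ∈ Finset.Icc 1 (m - 1), α j = 1)
    (hsep : ∀ e ∈ E,
      (k : ℝ) / (s * n) < ∑ j ∈ Finset.Icc 1 (m - 1), α j * (if j ∈ e then 1 else 0)) :
    ¬ isFracMatching n k E s := by
  rintro ⟨β, hβ0, hβs, hload⟩
  have hsn_pos : 0 < s * n := hsn ▸ Nat.cast_pos.mpr hm
  have hs : 0 < s := pos_of_mul_pos_left hsn_pos n.cast_nonneg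
  have hn : (0 : ℝ) < n := pos_of_mul_pos_right hsn_pos hs.le
  have hmn : m < n := by exact_mod_cast (hsn.trans_lt (by nlinarith) : (m : ℝ) < n)
  have hJ : Icc 1 (m - 1) ⊆ Icc 1 n := Icc_subset_Icc_right (by omega)
  have hthreshold : (k : ℝ) / (s * n) * ∑ e ∈ E, β e = k / n := by
    rw [hβs]
    field_simp
  have hcontra : (k : ℝ) / n < k / n :=
    calc (k : ℝ) / n = k / (s * n) * ∑ e ∈ E, β e := hthreshold.symm
      _ < ∑ e ∈ E, β e * ∑ j ∈ Icc 1 (m - 1), α j * (if j ∈ e then 1 else 0) :=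
          mul_sum_lt_sum_mul_of_forall_lt (fun e _ => hβ0 e) (hβs ▸ hs) hsep
      _ = ∑ j ∈ Icc 1 (m - 1), α j * ∑ e ∈ E, β e * (if j ∈ e then 1 else 0) :=
          sum_mul_sum_mul_comm _ _ _ _ _
      _ ≤ k / n :=
          sum_mul_le_of_sum_eq_one (fun j _ => hα0 j) hα1 fun j hj => (hload j (hJ hj)).2
  exact lt_irrefl _ hcontra

/-- If there are nonnegative weights `α_1,…,α_{sn-1}` summing to `1` with
`∑_j α_j 𝟙_e(j) > k/(sn)` for every edge `e`, then the hypergraph has no fractional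
matching of cardinality `s`. -/
theorem stmt2 (n k m : ℕ) (s : ℝ) (hn : 0 < n) (hk : 0 < k) (hm : 0 < m)
    (hsn : (m : ℝ) = s * n) (hs1 : (k : ℝ) / n < s) (hs2 : s < 1)
    (E : Finset (Finset ℕ)) (hE : ∀ f ∈ E, f ⊆ Finset.Icc 1 n ∧ f.card = k)
    (α : ℕ → ℝ) (hα0 : ∀ j, 0 ≤ α j) (hα1 : ∑ j ∈ Finset.Icc 1 (m - 1), α j = 1)
    (hsep : ∀ e ∈ E,
      (k : ℝ) / (s * n) < ∑ j ∈ Finset.Icc 1 (m - 1), α j * (if j ∈ e then 1 else 0)) :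
    ¬ isFracMatching n k E s :=
  stmt2_general n k m s hm hsn hs2 E α hα0 hα1 hsep
end

section
/- Let n, k be positive integers with k < n, let s ∈ (k/n, 1) with sn an integer, and let 1 ≤ c ≤ sn − 1. Then the hypergraph with edge set E_c = {e ∈ binom([n],k) : |e ∩ [c]| > kc/(sn)} has no fractional matching of cardinality s. -/
open Finset

/-!
Double counting the load on the first `c` vertices. Each of them carries load at most `k/n`,
so the total is at most `ck/n`. On the other hand every edge of `E_c` meets `[c]` in more than
`kc/(sn)` vertices, and the weights sum to `s > 0`, so the total exceeds `s · kc/(sn) = ck/n`.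
-/

theorem Finset.sum_sum_ite_mem_eq_sum_mul_card_inter {β : Type*} [DecidableEq β]
    (E : Finset (Finset β)) (α : Finset β → ℝ) (S : Finset β) :
    ∑ j ∈ S, ∑ e ∈ E, α e * (if j ∈ e then 1 else 0) = ∑ e ∈ E, α e * (e ∩ S).card := by
  rw [Finset.sum_comm]
  refine Finset.sum_congr rfl fun e _ => ?_
  rw [← Finset.mul_sum, Finset.sum_boole, Finset.filter_mem_eq_inter, Finset.inter_comm]

theorem Finset.mul_sum_lt_sum_mul_of_lt {ι : Type*} {E : Finset ι} {α g : ι → ℝ} {r : ℝ}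
    (hα : ∀ i ∈ E, 0 ≤ α i) (hpos : 0 < ∑ i ∈ E, α i) (hg : ∀ i ∈ E, r < g i) :
    r * ∑ i ∈ E, α i < ∑ i ∈ E, α i * g i := by
  obtain ⟨i, hiE, hi⟩ : ∃ i ∈ E, (0 : ι → ℝ) i < α i :=
    Finset.exists_lt_of_sum_lt (by simpa using hpos)
  rw [Finset.mul_sum]
  exact Finset.sum_lt_sum
    (fun j hj => by rw [mul_comm]; exact mul_le_mul_of_nonneg_left (hg j hj).le (hα j hj))
    ⟨i, hiE, by rw [mul_comm]; exact mul_lt_mul_of_pos_left (hg i hiE) hi⟩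

theorem stmt4_general (n k m c : ℕ) (s : ℝ)
    (hsn : (m : ℝ) = s * n) (hs1 : (k : ℝ) / n < s) (hs2 : s < 1)
    (hc2 : c ≤ m - 1) :
    ¬ isFracMatching n k
      (((Finset.Icc 1 n).powersetCard k).filter
        (fun e => ((k * c : ℕ) : ℝ) / (s * n) < ((e ∩ Finset.Icc 1 c).card : ℝ))) s := by
  rintro ⟨α, hα, hsum, hload⟩
  have hs : 0 < s := lt_of_le_of_lt (by positivity) hs1
  have hcn : c ≤ n := by
    have : (m : ℝ) ≤ n := by rw [hsn]; nlinarith [(Nat.cast_nonneg n : (0 : ℝ) ≤ n)]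
    have : m ≤ n := by exact_mod_cast this
    omega
  have hlower := Finset.mul_sum_lt_sum_mul_of_lt (fun e _ => hα e) (hsum ▸ hs)
    (fun e he => (Finset.mem_filter.1 he).2)
  rw [hsum, ← Finset.sum_sum_ite_mem_eq_sum_mul_card_inter] at hlower
  have hupper := Finset.sum_le_card_nsmul (Finset.Icc 1 c) _ _ fun j hj =>
    (hload j (Finset.Icc_subset_Icc_right hcn hj)).2
  have hrs : ((k * c : ℕ) : ℝ) / (s * n) * s = c * ((k : ℝ) / n) := by
    push_cast
    field_simp
  simp only [Nat.card_Icc, add_tsub_cancel_right, nsmul_eq_mul] at hupper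
  linarith

/-- The hypergraph `E_c = {e ∈ binom([n],k) : |e ∩ [c]| > kc/(sn)}` has no
fractional matching of cardinality `s`. -/
theorem stmt4 (n k m c : ℕ) (s : ℝ) (hn : 0 < n) (hk : 0 < k) (hkn : k < n)
    (hsn : (m : ℝ) = s * n) (hs1 : (k : ℝ) / n < s) (hs2 : s < 1)
    (hc1 : 1 ≤ c) (hc2 : c ≤ m - 1) :
    ¬ isFracMatching n k
      (((Finset.Icc 1 n).powersetCard k).filter
        (fun e => ((k * c : ℕ) : ℝ) / (s * n) < ((e ∩ Finset.Icc 1 c).card : ℝ))) s :=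
  stmt4_general n k m c s hsn hs1 hs2 hc2
end

section
/- For fixed n and k with k < n, the function s ↦ max_{1 ≤ c ≤ sn−1} Σ_{i > kc/(sn)} C(c,i)·C(n−c,k−i) is nondecreasing in s over values s ∈ (k/n, 1) with sn an integer. Equivalently, for integers m < m' in (k, n), max_{1 ≤ c ≤ m−1} Σ_{i > kc/m} C(c,i)·C(n−c,k−i) ≤ max_{1 ≤ c ≤ m'−1} Σ_{i > kc/m'} C(c,i)·C(n−c,k−i). -/
open Finset

theorem sum_filter_lt_antitone {M : Type*} [AddCommMonoid M] [PartialOrder M]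
    [CanonicallyOrderedAdd M] (s : Finset ℕ) (f : ℕ → M) {t t' : ℝ} (ht : t' ≤ t) :
    ∑ i ∈ s.filter (fun i : ℕ => t < (i : ℝ)), f i ≤
      ∑ i ∈ s.filter (fun i : ℕ => t' < (i : ℝ)), f i :=
  sum_le_sum_of_subset (monotone_filter_right s fun _ _ hi => ht.trans_lt hi)

theorem stmt6_general (n k m m' : ℕ) (hmm' : m < m') :
    ((Finset.Icc 1 (m - 1)).sup fun c =>
        ∑ i ∈ (Finset.range (k + 1)).filter
            (fun i : ℕ => ((k * c : ℕ) : ℝ) / (m : ℝ) < (i : ℝ)),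
          c.choose i * (n - c).choose (k - i)) ≤
      ((Finset.Icc 1 (m' - 1)).sup fun c =>
        ∑ i ∈ (Finset.range (k + 1)).filter
            (fun i : ℕ => ((k * c : ℕ) : ℝ) / (m' : ℝ) < (i : ℝ)),
          c.choose i * (n - c).choose (k - i)) := by
  refine Finset.sup_le fun c hc => ?_
  obtain ⟨hc₁, hcm⟩ := Finset.mem_Icc.mp hc
  have hc' : c ∈ Finset.Icc 1 (m' - 1) := Finset.mem_Icc.mpr ⟨hc₁, by omega⟩
  have hm : (0 : ℝ) < m := by exact_mod_cast (show 0 < m by omega)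
  refine le_trans ?_ (Finset.le_sup hc')
  exact sum_filter_lt_antitone _ _ (by gcongr)

/-- Monotonicity of the extremal formula: for integers `k < m < m' < n`,
`max_{1 ≤ c ≤ m−1} ∑_{i > kc/m} C(c,i)C(n−c,k−i) ≤
 max_{1 ≤ c ≤ m'−1} ∑_{i > kc/m'} C(c,i)C(n−c,k−i)`. -/
theorem stmt6 (n k m m' : ℕ) (hkn : k < n) (hk : 0 < k)
    (hkm : k < m) (hmm' : m < m') (hm'n : m' < n) :
    ((Finset.Icc 1 (m - 1)).sup fun c =>
        ∑ i ∈ (Finset.range (k + 1)).filter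
            (fun i : ℕ => ((k * c : ℕ) : ℝ) / (m : ℝ) < (i : ℝ)),
          c.choose i * (n - c).choose (k - i)) ≤
      ((Finset.Icc 1 (m' - 1)).sup fun c =>
        ∑ i ∈ (Finset.range (k + 1)).filter
            (fun i : ℕ => ((k * c : ℕ) : ℝ) / (m' : ℝ) < (i : ℝ)),
          c.choose i * (n - c).choose (k - i)) :=
  stmt6_general n k m m' hmm'
end

section
/- Let m = sn be a positive integer with 1 ≤ m ≤ n. For j ∈ [m−1] define z_j ∈ ℝ^n by (z_j)_i = m − j if i ≤ j and (z_j)_i = −j if i > j. Then the vectors z_1, …, z_{m−1} are linearly independent, and every vector ω ∈ ℝ^n with ω_1 ≥ ω_2 ≥ … ≥ ω_n, Σ_{i=1}^m ω_i = 0, and ω_i = ω_m for all i > m is a linear combination Σ_j y_j z_j with all y_j ≥ 0. -/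
/-!
The consecutive differences of `z_j` are `m` at position `j` and `0` elsewhere. Hence the
difference map sends `z_j` to `m e_j`, which gives independence. For the cone, take
`y_j = (ω_j - ω_{j+1}) / m`: then `ω - ∑ y_j z_j` has vanishing consecutive differences (in the
tail because `ω` is constant there), so it is constant, and its first `m` coordinates sum to
zero, as they do for `ω` and for every `z_j`; so it vanishes.
-/

open Finset

/-- The basis vectors `z_j` with `j` coordinates `m−j` followed by `−j`'s. -/
def zvec (n m j : ℕ) : Fin n → ℝ := fun i => if (i : ℕ) + 1 ≤ j then (m : ℝ) - j else -(j : ℝ)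

theorem sum_filter_fin_eq_sum_range {M : Type*} [AddCommMonoid M] {n m : ℕ} (hmn : m ≤ n)
    (f : ℕ → M) :
    ∑ i ∈ univ.filter (fun i : Fin n => (i : ℕ) + 1 ≤ m), f i = ∑ i ∈ range m, f i := by
  rw [sum_filter, Fin.sum_univ_eq_sum_range (fun i => if i + 1 ≤ m then f i else 0), ← sum_filter]
  congr 1
  ext i
  simp only [mem_filter, mem_range]
  omega

theorem Fin.forall_eq_of_forall_succ {α : Type*} {n : ℕ} {f : Fin n → α}
    (hf : ∀ a b : Fin n, (a : ℕ) + 1 = b → f a = f b) (i j : Fin n) : f i = f j := by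
  have hn : 0 < n := i.pos
  suffices h : ∀ i : Fin n, f i = f ⟨0, hn⟩ by rw [h i, h j]
  rintro ⟨k, hk⟩
  induction k with
  | zero => rfl
  | succ k ih => rw [← hf ⟨k, by omega⟩ ⟨k + 1, hk⟩ rfl, ih]

theorem eq_zero_of_forall_succ_of_sum_eq_zero {n m : ℕ} (hm : 0 < m) (hmn : m ≤ n)
    {f : Fin n → ℝ}
    (hf : ∀ a b : Fin n, (a : ℕ) + 1 = b → f a = f b)
    (hsum : ∑ i ∈ univ.filter (fun i : Fin n => (i : ℕ) + 1 ≤ m), f i = 0) : f = 0 := by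
  set c := f ⟨0, by omega⟩
  have hconst : ∀ i, f i = c := fun i => Fin.forall_eq_of_forall_succ hf i _
  rw [sum_congr rfl fun i _ => hconst i, sum_filter_fin_eq_sum_range hmn fun _ => c, sum_const,
    card_range, nsmul_eq_mul, mul_eq_zero] at hsum
  have hc : c = 0 := hsum.resolve_left (by positivity)
  funext i
  rw [hconst, hc, Pi.zero_apply]

theorem zvec_sub_zvec_succ (n m j : ℕ) {a b : Fin n} (hab : (a : ℕ) + 1 = b) :
    zvec n m j a - zvec n m j b = if j = (a : ℕ) + 1 then (m : ℝ) else 0 := by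
  unfold zvec
  rcases lt_trichotomy j ((a : ℕ) + 1) with h | h | h
  · rw [if_neg (by omega), if_neg (by omega), if_neg (by omega)]; ring
  · rw [if_pos (by omega), if_neg (by omega), if_pos h, h]; push_cast; ring
  · rw [if_pos (by omega), if_pos (by omega), if_neg (by omega)]; ring

theorem sum_zvec_eq_zero {n m j : ℕ} (hjm : j ≤ m) (hmn : m ≤ n) :
    ∑ i ∈ univ.filter (fun i : Fin n => (i : ℕ) + 1 ≤ m), zvec n m j i = 0 := by
  obtain ⟨t, rfl⟩ := Nat.exists_eq_add_of_le hjm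
  unfold zvec
  rw [sum_filter_fin_eq_sum_range hmn
      fun i => if i + 1 ≤ j then ((j + t : ℕ) : ℝ) - j else -(j : ℝ),
    sum_range_add, sum_congr rfl fun i hi => if_pos (by rw [mem_range] at hi; omega),
    sum_congr rfl fun i _ => if_neg (by omega)]
  simp only [sum_const, card_range, nsmul_eq_mul]
  push_cast
  ring

theorem sum_smul_zvec_sub_succ (n m : ℕ) (s : Finset ℕ) (c : ℕ → ℝ) {a b : Fin n}
    (hab : (a : ℕ) + 1 = b) :
    (∑ j ∈ s, c j • zvec n m j) a - (∑ j ∈ s, c j • zvec n m j) b =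
      if (a : ℕ) + 1 ∈ s then c ((a : ℕ) + 1) * m else 0 := by
  simp only [Finset.sum_apply, Pi.smul_apply, smul_eq_mul, ← sum_sub_distrib, ← mul_sub,
    zvec_sub_zvec_succ n m _ hab, mul_ite, mul_zero, sum_ite_eq']

theorem sum_sum_smul_zvec_eq_zero {n m : ℕ} (hmn : m ≤ n) (s : Finset ℕ) (c : ℕ → ℝ)
    (hs : ∀ j ∈ s, j ≤ m) :
    ∑ i ∈ univ.filter (fun i : Fin n => (i : ℕ) + 1 ≤ m), (∑ j ∈ s, c j • zvec n m j) i = 0 := by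
  simp only [Finset.sum_apply, Pi.smul_apply, smul_eq_mul]
  rw [sum_comm]
  exact sum_eq_zero fun j hj => by rw [← mul_sum, sum_zvec_eq_zero (hs j hj) hmn, mul_zero]

theorem linearIndependent_zvec {n m : ℕ} (hm : 0 < m) (hmn : m ≤ n) :
    LinearIndependent ℝ (fun j : Fin (m - 1) => zvec n m ((j : ℕ) + 1)) := by
  let D : (Fin n → ℝ) →ₗ[ℝ] (Fin (m - 1) → ℝ) := LinearMap.pi fun k =>
    LinearMap.proj ⟨k, by omega⟩ - LinearMap.proj ⟨k + 1, by omega⟩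
  have hD : D ∘ (fun j : Fin (m - 1) => zvec n m ((j : ℕ) + 1)) =
      fun j => Units.mk0 (m : ℝ) (by positivity) • Pi.basisFun ℝ (Fin (m - 1)) j := by
    funext j k
    simp [D, zvec_sub_zvec_succ n m _ (a := ⟨k, _⟩) (b := ⟨k + 1, _⟩) rfl, Pi.single_apply,
      eq_comm, Fin.val_inj]
  exact .of_comp D (hD ▸ (Pi.basisFun ℝ _).linearIndependent.units_smul _)

/-- The vectors `z_1,…,z_{m−1}` are linearly independent, and every nonincreasing
`ω ∈ ℝ^n` with `∑_{i=1}^m ω_i = 0` and constant tail `ω_i = ω_m` for `i > m` is a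
nonnegative linear combination of them. -/
theorem stmt8 (n m : ℕ) (hm : 0 < m) (hmn : m ≤ n) :
    (LinearIndependent ℝ (fun j : Fin (m - 1) => zvec n m ((j : ℕ) + 1))) ∧
    ∀ ω : Fin n → ℝ,
      (∀ i i' : Fin n, i ≤ i' → ω i' ≤ ω i) →
      (∑ i ∈ Finset.univ.filter (fun i : Fin n => (i : ℕ) + 1 ≤ m), ω i) = 0 →
      (∀ i i' : Fin n, m ≤ (i : ℕ) + 1 → m ≤ (i' : ℕ) + 1 → ω i = ω i') →
      ∃ y : ℕ → ℝ, (∀ j, 0 ≤ y j) ∧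
        ω = ∑ j ∈ Finset.Icc 1 (m - 1), y j • zvec n m j := by
  refine ⟨linearIndependent_zvec hm hmn, fun ω hanti hsum htail => ?_⟩
  have hmR : (0 : ℝ) < m := by exact_mod_cast hm
  -- `y j = (ω_j - ω_{j+1}) / m` in the paper's 1-based indexing
  let y : ℕ → ℝ := fun j =>
    if h : 1 ≤ j ∧ j < m then (ω ⟨j - 1, by omega⟩ - ω ⟨j, by omega⟩) / m else 0
  refine ⟨y, fun j => ?_, ?_⟩
  · by_cases h : 1 ≤ j ∧ j < m
    · simp only [y, dif_pos h]
      exact div_nonneg (sub_nonneg.mpr (hanti _ _ (Fin.mk_le_mk.mpr (by omega)))) hmR.le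
    · simp only [y, dif_neg h, le_refl]
  rw [← sub_eq_zero]
  refine eq_zero_of_forall_succ_of_sum_eq_zero hm hmn (fun a b hab => ?_) ?_
  · rw [Pi.sub_apply, Pi.sub_apply, sub_eq_sub_iff_sub_eq_sub, sum_smul_zvec_sub_succ n m _ y hab]
    by_cases ha : (a : ℕ) + 1 < m
    · rw [if_pos (mem_Icc.mpr (by omega))]
      simp only [y, dif_pos (show 1 ≤ (a : ℕ) + 1 ∧ (a : ℕ) + 1 < m by omega)]
      rw [div_mul_cancel₀ _ hmR.ne']
      simp only [Nat.add_sub_cancel, Fin.eta]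
      simp only [hab, Fin.eta]
    · rw [if_neg (by simp only [mem_Icc]; omega), htail a b (by omega) (by omega), sub_self]
  · simp only [Pi.sub_apply]
    rw [sum_sub_distrib, hsum, sum_sum_smul_zvec_eq_zero hmn _ y fun j hj => ?_, sub_zero]
    exact (mem_Icc.mp hj).2.trans (Nat.sub_le m 1)
end

section
/- Let n, k be positive integers with k < n and let s ∈ (k/n, 1). Then max_{1 ≤ c ≤ ⌊ns⌋−1} Σ_{i > kc/⌊ns⌋} C(c,i)·C(n−c,k−i) ≤ max_{1 ≤ c ≤ ⌈ns⌉−1} Σ_{i > kc/⌈ns⌉} C(c,i)·C(n−c,k−i), provided ⌊ns⌋ ≥ 2. -/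
/-!
Enlarging the denominator `d` from `⌊ns⌋` to `⌈ns⌉` only lowers each threshold `kc/d`, so every
tail sum grows, and it also enlarges the range `1 ≤ c ≤ d - 1` over which the maximum is taken.
-/

open Finset

lemma sum_filter_lt_le_of_le {ι M : Type*} [AddCommMonoid M] [PartialOrder M]
    [CanonicallyOrderedAdd M] (s : Finset ι) (g : ι → ℝ) (f : ι → M) {t t' : ℝ} (h : t' ≤ t) :
    ∑ i ∈ s.filter (fun i => t < g i), f i ≤ ∑ i ∈ s.filter (fun i => t' < g i), f i :=
  sum_le_sum_of_subset <| monotone_filter_right s fun _ _ => h.trans_lt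

noncomputable def maxUpperTail (n k d : ℕ) : ℕ :=
  (Icc 1 (d - 1)).sup fun c =>
    ∑ i ∈ (range (k + 1)).filter (fun i : ℕ => ((k * c : ℕ) : ℝ) / (d : ℝ) < (i : ℝ)),
      c.choose i * (n - c).choose (k - i)

lemma maxUpperTail_mono (n k : ℕ) {d d' : ℕ} (h : d ≤ d') :
    maxUpperTail n k d ≤ maxUpperTail n k d' := by
  refine Finset.sup_le fun c hc => ?_
  have hd : 0 < d := by rw [mem_Icc] at hc; omega
  have hc' : c ∈ Icc 1 (d' - 1) := Icc_subset_Icc_right (by omega) hc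
  refine Finset.le_sup_of_le hc' <| sum_filter_lt_le_of_le _ _ _ <|
    div_le_div_of_nonneg_left (Nat.cast_nonneg _) (Nat.cast_pos.mpr hd) (Nat.cast_le.mpr h)

theorem stmt14_general (n k : ℕ) (s : ℝ) :
    ((Finset.Icc 1 (⌊(n : ℝ) * s⌋₊ - 1)).sup fun c =>
        ∑ i ∈ (Finset.range (k + 1)).filter
            (fun i : ℕ => ((k * c : ℕ) : ℝ) / (⌊(n : ℝ) * s⌋₊ : ℝ) < (i : ℝ)),
          c.choose i * (n - c).choose (k - i)) ≤
      ((Finset.Icc 1 (⌈(n : ℝ) * s⌉₊ - 1)).sup fun c =>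
        ∑ i ∈ (Finset.range (k + 1)).filter
            (fun i : ℕ => ((k * c : ℕ) : ℝ) / (⌈(n : ℝ) * s⌉₊ : ℝ) < (i : ℝ)),
          c.choose i * (n - c).choose (k - i)) :=
  maxUpperTail_mono n k (Nat.floor_le_ceil _)

/-- Inequality (e67): the extremal formula at `⌊ns⌋` is at most the formula at `⌈ns⌉`. -/
theorem stmt14 (n k : ℕ) (hk : 0 < k) (hkn : k < n) (s : ℝ)
    (hs1 : (k : ℝ) / n < s) (hs2 : s < 1) (hfloor : 2 ≤ ⌊(n : ℝ) * s⌋₊) :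
    ((Finset.Icc 1 (⌊(n : ℝ) * s⌋₊ - 1)).sup fun c =>
        ∑ i ∈ (Finset.range (k + 1)).filter
            (fun i : ℕ => ((k * c : ℕ) : ℝ) / (⌊(n : ℝ) * s⌋₊ : ℝ) < (i : ℝ)),
          c.choose i * (n - c).choose (k - i)) ≤
      ((Finset.Icc 1 (⌈(n : ℝ) * s⌉₊ - 1)).sup fun c =>
        ∑ i ∈ (Finset.range (k + 1)).filter
            (fun i : ℕ => ((k * c : ℕ) : ℝ) / (⌈(n : ℝ) * s⌉₊ : ℝ) < (i : ℝ)),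
          c.choose i * (n - c).choose (k - i)) :=
  stmt14_general n k s
end

section
/- Let n, k, m be positive integers with k < m < n, and let t = k/m. Suppose α ∈ ℝ^{m−1} with α_j ≥ 0 and Σ_j α_j = 1 maximizes N(α) = |{x ∈ binom([n],k) : Σ_{j=1}^{m−1} α_j 𝟙_x(j) > t}| over the simplex. Then there exists δ > 0 and a maximizer α* with N(α*) = N(α) such that |Σ_j α*_j 𝟙_x(j) − t| > δ for every x ∈ binom([n],k). -/
/-!
Moving `α` by a small `s > 0` towards the vertex `e₁` of the simplex keeps every `k`-set that was
strictly above `t` strictly above, so by maximality the count does not change. On a `k`-set `x`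
the new value is `(1 - s) ⟨α, 𝟙_x⟩ + s 𝟙_x(1)`, and `𝟙_x(1) ∈ {0, 1}` differs from `t ∈ (0, 1)`,
so this value equals `t` for at most one `s`; hence all small `s > 0` avoid `t` on the finitely
many `k`-sets, and `δ` can be taken below the least distance to `t`.
-/

open Finset

/-- The number of `k`-subsets `x` of `[n]` separated by the weights `α`:
`N(α) = |{x : ∑_j α_j 𝟙_x(j) > t}|`. -/
noncomputable def sepCount (n k m : ℕ) (t : ℝ) (α : ℕ → ℝ) : ℕ :=
  (((Finset.Icc 1 n).powersetCard k).filter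
    (fun x => t < ∑ j ∈ Finset.Icc 1 (m - 1), α j * (if j ∈ x then 1 else 0))).card

open Filter Topology

lemma eventually_lt_one_sub_mul_add_mul {a b t : ℝ} (ha : t < a) :
    ∀ᶠ s in 𝓝 (0 : ℝ), t < (1 - s) * a + s * b := by
  have hcont : Continuous fun s : ℝ => (1 - s) * a + s * b := by fun_prop
  exact hcont.continuousAt.eventually_const_lt (by simpa using ha)

lemma eventually_one_sub_mul_add_mul_ne {a b t : ℝ} (hb : b ≠ t) :
    ∀ᶠ s in 𝓝[>] (0 : ℝ), (1 - s) * a + s * b ≠ t := by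
  rcases eq_or_ne a t with rfl | ha
  · filter_upwards [self_mem_nhdsWithin] with s (hs : 0 < s) heq
    exact hb (by nlinarith [mul_pos hs hs])
  · have hcont : Continuous fun s : ℝ => (1 - s) * a + s * b := by fun_prop
    exact nhdsWithin_le_nhds (hcont.continuousAt.eventually_ne (by simpa using ha))

lemma Finset.exists_pos_forall_lt {ι : Type*} (F : Finset ι) {g : ι → ℝ}
    (hg : ∀ x ∈ F, 0 < g x) : ∃ δ > 0, ∀ x ∈ F, δ < g x := by
  have : ∀ᶠ δ in 𝓝[>] (0 : ℝ), ∀ x ∈ F, δ < g x :=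
    (eventually_all_finset F).2 fun x hx => nhdsWithin_le_nhds (eventually_lt_nhds (hg x hx))
  obtain ⟨δ, hδ, hδ0⟩ := (this.and self_mem_nhdsWithin).exists
  exact ⟨δ, hδ0, hδ⟩

lemma Finset.exists_step_preserving_gt_avoiding {ι : Type*} (F : Finset ι) {a b : ι → ℝ} {t : ℝ}
    (hb : ∀ x ∈ F, b x ≠ t) :
    ∃ s, 0 < s ∧ s < 1 ∧ ∀ x ∈ F,
      (t < a x → t < (1 - s) * a x + s * b x) ∧ (1 - s) * a x + s * b x ≠ t := by
  have hsmall : ∀ᶠ s in 𝓝[>] (0 : ℝ), s < 1 ∧ ∀ x ∈ F,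
      (t < a x → t < (1 - s) * a x + s * b x) ∧ (1 - s) * a x + s * b x ≠ t := by
    refine ((eventually_lt_nhds one_pos).filter_mono nhdsWithin_le_nhds).and
      ((eventually_all_finset F).2 fun x hx => Eventually.and ?_ ?_)
    · exact eventually_imp_distrib_left.2 fun hax =>
        (eventually_lt_one_sub_mul_add_mul hax).filter_mono nhdsWithin_le_nhds
    · exact eventually_one_sub_mul_add_mul_ne (hb x hx)
  obtain ⟨s, ⟨hs1, hF⟩, hs0⟩ := (hsmall.and self_mem_nhdsWithin).exists
  exact ⟨s, hs0, hs1, hF⟩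

lemma sum_one_sub_mul_add_single_mul {ι : Type*} [DecidableEq ι] {I : Finset ι} {j₀ : ι}
    (hj₀ : j₀ ∈ I) (α c : ι → ℝ) (s : ℝ) :
    ∑ j ∈ I, ((1 - s) * α j + s * if j = j₀ then 1 else 0) * c j
      = (1 - s) * ∑ j ∈ I, α j * c j + s * c j₀ := by
  simp only [add_mul, sum_add_distrib, mul_assoc, ← mul_sum, mul_ite, ite_mul, mul_one,
    mul_zero, zero_mul, sum_ite_eq', hj₀, if_true]

lemma one_sub_mul_add_single_nonneg {ι : Type*} [DecidableEq ι] {α : ι → ℝ} (hα : ∀ j, 0 ≤ α j)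
    {s : ℝ} (hs0 : 0 ≤ s) (hs1 : s ≤ 1) (j₀ j : ι) :
    0 ≤ (1 - s) * α j + s * if j = j₀ then 1 else 0 := by
  have := hα j
  split_ifs <;> nlinarith

lemma sepCount_mono {n k m : ℕ} {t : ℝ} {α β : ℕ → ℝ}
    (h : ∀ x ∈ (Icc 1 n).powersetCard k,
      t < ∑ j ∈ Icc 1 (m - 1), α j * (if j ∈ x then 1 else 0) →
      t < ∑ j ∈ Icc 1 (m - 1), β j * (if j ∈ x then 1 else 0)) :
    sepCount n k m t α ≤ sepCount n k m t β :=
  card_le_card fun x hx => by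
    rw [mem_filter] at hx ⊢
    exact ⟨hx.1, h x hx.1 hx.2⟩

theorem stmt16_general (n k m : ℕ) (hk : 0 < k) (hkm : k < m)
    (α : ℕ → ℝ) (hα0 : ∀ j, 0 ≤ α j) (hα1 : ∑ j ∈ Finset.Icc 1 (m - 1), α j = 1)
    (hmax : ∀ α' : ℕ → ℝ, (∀ j, 0 ≤ α' j) → (∑ j ∈ Finset.Icc 1 (m - 1), α' j = 1) →
      sepCount n k m ((k : ℝ) / m) α' ≤ sepCount n k m ((k : ℝ) / m) α) :
    ∃ δ : ℝ, 0 < δ ∧ ∃ α' : ℕ → ℝ, (∀ j, 0 ≤ α' j) ∧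
      (∑ j ∈ Finset.Icc 1 (m - 1), α' j = 1) ∧
      sepCount n k m ((k : ℝ) / m) α' = sepCount n k m ((k : ℝ) / m) α ∧
      ∀ x ∈ (Finset.Icc 1 n).powersetCard k,
        δ < |(∑ j ∈ Finset.Icc 1 (m - 1), α' j * (if j ∈ x then 1 else 0)) - (k : ℝ) / m| := by
  set t : ℝ := (k : ℝ) / m
  have hm : (0 : ℝ) < m := by exact_mod_cast hk.trans hkm
  have ht0 : 0 < t := div_pos (by exact_mod_cast hk) hm
  have ht1 : t < 1 := (div_lt_one hm).2 (by exact_mod_cast hkm)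
  have h1 : 1 ∈ Icc 1 (m - 1) := mem_Icc.2 ⟨le_rfl, by omega⟩
  set F := (Icc 1 n).powersetCard k
  set L : (ℕ → ℝ) → Finset ℕ → ℝ := fun β x => ∑ j ∈ Icc 1 (m - 1), β j * if j ∈ x then 1 else 0
  set β : ℝ → ℕ → ℝ := fun s j => (1 - s) * α j + s * if j = 1 then 1 else 0
  have hLβ (s : ℝ) (x : Finset ℕ) : L (β s) x = (1 - s) * L α x + s * if 1 ∈ x then 1 else 0 :=
    sum_one_sub_mul_add_single_mul h1 α _ s
  have hvertex : ∀ x ∈ F, (if 1 ∈ x then 1 else 0 : ℝ) ≠ t := fun x _ => by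
    split_ifs <;> linarith
  obtain ⟨s, hs0, hs1, hF⟩ := F.exists_step_preserving_gt_avoiding (a := L α) hvertex
  simp only [← hLβ] at hF
  have hβ0 : ∀ j, 0 ≤ β s j := one_sub_mul_add_single_nonneg hα0 hs0.le hs1.le 1
  have hβ1 : ∑ j ∈ Icc 1 (m - 1), β s j = 1 := by
    simpa only [mul_one, hα1, sub_add_cancel] using
      sum_one_sub_mul_add_single_mul h1 α (fun _ => 1) s
  obtain ⟨δ, hδ0, hδ⟩ := F.exists_pos_forall_lt (g := fun x => |L (β s) x - t|)
    fun x hx => abs_pos.2 (sub_ne_zero.2 (hF x hx).2)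
  have hcount : sepCount n k m t (β s) = sepCount n k m t α :=
    le_antisymm (hmax _ hβ0 hβ1) (sepCount_mono fun x hx => (hF x hx).1)
  exact ⟨δ, hδ0, β s, hβ0, hβ1, hcount, hδ⟩

/-- An extremal separating functional can be perturbed, without decreasing the count,
so that it strictly avoids the threshold `t = k/m` on every `k`-set. -/
theorem stmt16 (n k m : ℕ) (hk : 0 < k) (hkn : k < n) (hkm : k < m) (hmn : m < n)
    (α : ℕ → ℝ) (hα0 : ∀ j, 0 ≤ α j) (hα1 : ∑ j ∈ Finset.Icc 1 (m - 1), α j = 1)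
    (hmax : ∀ α' : ℕ → ℝ, (∀ j, 0 ≤ α' j) → (∑ j ∈ Finset.Icc 1 (m - 1), α' j = 1) →
      sepCount n k m ((k : ℝ) / m) α' ≤ sepCount n k m ((k : ℝ) / m) α) :
    ∃ δ : ℝ, 0 < δ ∧ ∃ α' : ℕ → ℝ, (∀ j, 0 ≤ α' j) ∧
      (∑ j ∈ Finset.Icc 1 (m - 1), α' j = 1) ∧
      sepCount n k m ((k : ℝ) / m) α' = sepCount n k m ((k : ℝ) / m) α ∧
      ∀ x ∈ (Finset.Icc 1 n).powersetCard k,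
        δ < |(∑ j ∈ Finset.Icc 1 (m - 1), α' j * (if j ∈ x then 1 else 0)) - (k : ℝ) / m| :=
  stmt16_general n k m hk hkm α hα0 hα1 hmax
end
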